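/- arXiv:math/9903123 — 2 statements merged into one kernel-verified Lean document; each statement's English description precedes it below -/
import Mathlib

section
/- The set of simple roots Π₁ of any subsystem Δ₁ of the real roots of an affine root system is finite. -/
open scoped BigOperators

/-- Abstract data of (the root system of) an affine Lie algebra, living in the
complex dual Cartan `V = 𝔥*`.  `ι` indexes the simple roots. -/
structure AffineRootSystem (ι V : Type*) [Fintype ι] [AddCommGroup V] [Module ℂ V] where
  /-- the normalized invariant symmetric bilinear form `( , )` on `𝔥*` -/
  B : V →ₗ[ℂ] V →ₗ[ℂ] ℂ
  symm : ∀ x y, B x y = B y x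
  /-- the simple roots `α_i` -/
  simple : ι → V
  /-- the set of all roots `Δ` -/
  Δ : Set V
  /-- the set of real roots `Δ_re` -/
  Δre : Set V
  /-- the set of positive roots `Δ⁺` -/
  pos : Set V
  /-- the basic positive imaginary root `δ` -/
  δ : V
  /-- a fixed `ρ` with `(α_i∨, ρ) = 1` -/
  ρ : V
  /-- the integral weight lattice `P` -/
  P : AddSubgroup V
  /-- the reflection `s_α` (as a linear automorphism of `𝔥*`) -/
  reflEquiv : V → (V ≃ₗ[ℂ] V)
  Δre_sub : Δre ⊆ Δ
  pos_sub : pos ⊆ Δ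
  simple_mem : ∀ i, simple i ∈ Δre
  simple_pos : ∀ i, simple i ∈ pos
  δ_ne : δ ≠ 0
  δ_pos : δ ∈ pos
  B_δ_δ : B δ δ = 0
  B_δ_re : ∀ α ∈ Δre, B δ α = 0
  norm_rat_pos : ∀ α ∈ Δre, ∃ q : ℚ, 0 < q ∧ B α α = (q : ℂ)
  pairing_rat : ∀ α ∈ Δre, ∀ β ∈ Δre, ∃ q : ℚ, B α β = (q : ℂ)
  reflEquiv_apply : ∀ α ∈ Δre, ∀ v, reflEquiv α v = v - (B ((2 / B α α) • α) v) • α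
  refl_closed : ∀ α ∈ Δre, ∀ β ∈ Δre, reflEquiv α β ∈ Δre
  neg_mem : ∀ α ∈ Δre, -α ∈ Δre
  pos_or_neg : ∀ α ∈ Δre, α ∈ pos ∨ -α ∈ pos
  not_both : ∀ α ∈ Δre, ¬(α ∈ pos ∧ -α ∈ pos)
  ρ_normalized : ∀ i, B ((2 / B (simple i) (simple i)) • simple i) ρ = 1
  simple_mem_P : ∀ i, simple i ∈ P
  ρ_mem_P : ρ ∈ P
  Δre_sub_P : Δre ⊆ (P : Set V)
  /-- each real root belongs to a `δ`-string of real roots -/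
  string : ∀ α ∈ Δre, ∃ r : ℤ, 0 < r ∧ ∀ n : ℤ, α + (n * r) • δ ∈ Δre
  /-- finitely many classes of real roots modulo `ℤδ` (finiteness of `Δ_cl`) -/
  cl_finite : ∃ F : Finset V, ∀ α ∈ Δre, ∃ γ ∈ F, ∃ n : ℤ, α = γ + n • δ
  /-- the form is positive semidefinite on the rational span of the real roots,
  with radical spanned by `δ` -/
  semidef : ∀ (t : Finset V) (c : V → ℚ), (↑t : Set V) ⊆ Δre →
    ∃ q : ℚ, 0 ≤ q ∧
      B (∑ α ∈ t, (c α : ℂ) • α) (∑ α ∈ t, (c α : ℂ) • α) = (q : ℂ) ∧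
      (q = 0 → ∃ s : ℚ, ∑ α ∈ t, (c α : ℂ) • α = (s : ℂ) • δ)

namespace AffineRootSystem

variable {ι V : Type*} [Fintype ι] [AddCommGroup V] [Module ℂ V]
variable (A : AffineRootSystem ι V)

/-- the coroot `α∨ = 2α/(α,α)` -/
noncomputable def coroot (α : V) : V := (2 / A.B α α) • α

/-- the pairing `(α∨, v)` -/
noncomputable def pair (α v : V) : ℂ := A.B (A.coroot α) v

/-- the reflection `s_α` as a map -/
noncomputable def refl (α v : V) : V := A.reflEquiv α v

/-- a subsystem of `Δ_re`: a subset closed under its own reflections -/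
def IsSubsystem (Δ₁ : Set V) : Prop :=
  Δ₁ ⊆ A.Δre ∧ ∀ α ∈ Δ₁, ∀ β ∈ Δ₁, A.refl α β ∈ Δ₁

/-- the group generated by the reflections in a set of roots -/
noncomputable def weylOf (s : Set V) : Subgroup (V ≃ₗ[ℂ] V) :=
  Subgroup.closure (A.reflEquiv '' s)

/-- the Weyl group `W` -/
noncomputable def W : Subgroup (V ≃ₗ[ℂ] V) := A.weylOf A.Δre

/-- the shifted (dot) action `w ∘ λ = w(λ+ρ) - ρ` -/
noncomputable def dot (w : V ≃ₗ[ℂ] V) (lam : V) : V := w (lam + A.ρ) - A.ρ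

/-- membership in the `ℚ`-span of a subset of `V` -/
def memRatSpan (s : Set V) (v : V) : Prop :=
  ∃ (t : Finset V) (c : V → ℚ), (↑t : Set V) ⊆ s ∧ v = ∑ α ∈ t, (c α : ℂ) • α

/-- membership in the `ℚ_{≥0}`-cone spanned by a subset of `V` -/
def memRatSpanNonneg (s : Set V) (v : V) : Prop :=
  ∃ (t : Finset V) (c : V → ℚ), (↑t : Set V) ⊆ s ∧ (∀ α ∈ t, 0 ≤ c α) ∧
    v = ∑ α ∈ t, (c α : ℂ) • α

/-- the positive part `Δ₁⁺ = Δ₁ ∩ Δ⁺` of a subsystem -/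
def posPart (Δ₁ : Set V) : Set V := Δ₁ ∩ A.pos

/-- the set `Π₁` of simple roots of a subsystem:
`Π₁ = {α ∈ Δ₁⁺ ; s_α(Δ₁⁺ \ {α}) ⊆ Δ₁⁺}` -/
noncomputable def simpleOf (Δ₁ : Set V) : Set V :=
  {α ∈ A.posPart Δ₁ | ∀ β ∈ A.posPart Δ₁ \ {α}, A.refl α β ∈ A.posPart Δ₁}

/-- the integral root system `Δ(λ) = {α ∈ Δ_re ; (α∨, λ+ρ) ∈ ℤ}` -/
noncomputable def Δint (lam : V) : Set V :=
  {α ∈ A.Δre | ∃ n : ℤ, A.pair α (lam + A.ρ) = (n : ℂ)}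

/-- `Δ⁺(λ)` -/
noncomputable def ΔintPos (lam : V) : Set V := A.Δint lam ∩ A.pos

/-- `Δ⁻(λ)` -/
noncomputable def ΔintNeg (lam : V) : Set V := {α ∈ A.Δint lam | -α ∈ A.pos}

/-- `Δ₀(λ) = {α ∈ Δ_re ; (α∨, λ+ρ) = 0}` -/
noncomputable def Δ0 (lam : V) : Set V := {α ∈ A.Δre | A.pair α (lam + A.ρ) = 0}

/-- `Δ₀⁺(λ)` -/
noncomputable def Δ0Pos (lam : V) : Set V := A.Δ0 lam ∩ A.pos

/-- the integral Weyl group `W(λ)` -/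
noncomputable def Wint (lam : V) : Subgroup (V ≃ₗ[ℂ] V) := A.weylOf (A.Δint lam)

/-- the subgroup `W₀(λ)` -/
noncomputable def W0 (lam : V) : Subgroup (V ≃ₗ[ℂ] V) := A.weylOf (A.Δ0 lam)

/-- the dot-orbit of `λ` under `W(λ)` -/
noncomputable def orbit (lam : V) : Set V := {μ | ∃ w ∈ A.Wint lam, μ = A.dot w lam}

/-- `𝒞 = {λ ; (δ, λ+ρ) ≠ 0}` -/
noncomputable def CC : Set V := {lam | A.B A.δ (lam + A.ρ) ≠ 0}

/-- `(α∨, λ+ρ)` is a nonnegative real number -/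
noncomputable def nonnegAt (lam α : V) : Prop :=
  ∃ r : ℝ, 0 ≤ r ∧ A.pair α (lam + A.ρ) = (r : ℂ)

/-- `(α∨, λ+ρ)` is a nonpositive real number -/
noncomputable def nonposAt (lam α : V) : Prop :=
  ∃ r : ℝ, r ≤ 0 ∧ A.pair α (lam + A.ρ) = (r : ℂ)

/-- `𝔥*⁺ = {λ ; (α∨,λ+ρ) ≥ 0 for all α ∈ Δ⁺(λ)}` -/
noncomputable def domP : Set V := {lam | ∀ α ∈ A.ΔintPos lam, A.nonnegAt lam α}

/-- `𝔥*⁻` -/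
noncomputable def domM : Set V := {lam | ∀ α ∈ A.ΔintPos lam, A.nonposAt lam α}

/-- `𝒞⁺` -/
noncomputable def CCp : Set V := A.CC ∩ A.domP

/-- `𝒞⁻` -/
noncomputable def CCm : Set V := A.CC ∩ A.domM

/-- `Δ_J = Δ ∩ Σ_{i ∈ J} ℤ α_i` -/
noncomputable def ΔJ (J : Set ι) : Set V :=
  {α ∈ A.Δ | ∃ c : ι → ℤ, (∀ i, i ∉ J → c i = 0) ∧ α = ∑ i, (c i : ℂ) • A.simple i}

/-- the dominant integral weights `P⁺` -/
noncomputable def Pplus : Set V :=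
  {v | v ∈ A.P ∧ ∀ i, ∃ n : ℤ, 0 ≤ n ∧ A.pair (A.simple i) v = (n : ℂ)}

/-- the rational points `𝔥*_ℚ = ℚ ⊗_ℤ P` -/
noncomputable def ratPoints : Set V :=
  {v | ∃ (t : Finset V) (c : V → ℚ), (↑t : Set V) ⊆ (A.P : Set V) ∧
    v = ∑ α ∈ t, (c α : ℂ) • α}

end AffineRootSystem

/-!
Real roots with the same image under `cl` form a `δ`-string `e t = γ + t δ`, `t ∈ ℤ`, on which the
form is constant: `(e s, e t) = (γ, γ) ≠ 0`. Hence `s_{e s}` acts on the string as `e t ↦ -e (2s - t)`,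
and for two simple roots `e m`, `e k` of `Δ₁` the product `s_{e k} s_{e m}` translates the positive
roots `e t` of `Δ₁` with `t ≠ m` by `2(k - m)`. Three simple roots on one string give enough such
translations to produce a root `e t` with both `e t` and `-e t` positive. So every string carries at
most two simple roots, and there are finitely many strings.
-/

namespace AffineRootSystem

variable {ι V : Type*} [Fintype ι] [AddCommGroup V] [Module ℂ V] (A : AffineRootSystem ι V)

lemma B_self_ne_zero {α : V} (hα : α ∈ A.Δre) : A.B α α ≠ 0 := by
  obtain ⟨q, hq, he⟩ := A.norm_rat_pos α hα
  rw [he]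
  exact_mod_cast hq.ne'

lemma refl_eq_sub_smul {α v : V} (hα : α ∈ A.Δre) {c : ℂ} (hv : A.B α v = c * A.B α α) :
    A.refl α v = v - (2 * c) • α := by
  have hαα := A.B_self_ne_zero hα
  rw [refl, A.reflEquiv_apply α hα, map_smul, LinearMap.smul_apply, hv, smul_eq_mul]
  congr 2
  field_simp

noncomputable def δShift (γ : V) (t : ℤ) : V := γ + (t : ℂ) • A.δ

section δString

variable {A} {γ : V}

lemma B_δ_of_δShift_mem_Δre {m : ℤ} (hm : A.δShift γ m ∈ A.Δre) : A.B A.δ γ = 0 := by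
  simpa [δShift, A.B_δ_δ] using A.B_δ_re _ hm

lemma B_δShift_δShift (hγ : A.B A.δ γ = 0) (s t : ℤ) :
    A.B (A.δShift γ s) (A.δShift γ t) = A.B γ γ := by
  simp [δShift, A.B_δ_δ, hγ, A.symm γ A.δ]

lemma δShift_injective : Function.Injective (A.δShift γ) := by
  intro s t hst
  have h : ((s : ℂ) - t) • A.δ = 0 := by
    rw [sub_smul, sub_eq_zero]
    exact add_left_cancel hst
  exact_mod_cast sub_eq_zero.mp ((smul_eq_zero.mp h).resolve_right A.δ_ne)

lemma neg_δShift_ne_δShift (hγ : A.B A.δ γ = 0) (hγγ : A.B γ γ ≠ 0) (s t : ℤ) :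
    -A.δShift γ s ≠ A.δShift γ t := by
  intro h
  have := congrArg (A.B (A.δShift γ s)) h
  rw [map_neg, B_δShift_δShift hγ, B_δShift_δShift hγ, neg_eq_iff_add_eq_zero, ← two_mul] at this
  exact hγγ (by simpa using this)

lemma refl_δShift (hγ : A.B A.δ γ = 0) {s : ℤ} (hs : A.δShift γ s ∈ A.Δre) (t : ℤ) :
    A.refl (A.δShift γ s) (A.δShift γ t) = -A.δShift γ (2 * s - t) := by
  rw [A.refl_eq_sub_smul hs (c := 1) (by rw [one_mul, B_δShift_δShift hγ, B_δShift_δShift hγ])]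
  simp only [δShift]
  push_cast
  module

lemma refl_neg_δShift (hγ : A.B A.δ γ = 0) {s : ℤ} (hs : A.δShift γ s ∈ A.Δre) (t : ℤ) :
    A.refl (A.δShift γ s) (-A.δShift γ t) = A.δShift γ (2 * s - t) := by
  rw [refl, map_neg, ← refl, refl_δShift hγ hs, neg_neg]

variable {Δ₁ : Set V} (hΔ₁ : Δ₁ ⊆ A.Δre)
include hΔ₁

lemma neg_δShift_mem_posPart_of_simpleOf {m t : ℤ} (hm : A.δShift γ m ∈ A.simpleOf Δ₁)
    (ht : A.δShift γ t ∈ A.posPart Δ₁) (htm : t ≠ m) :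
    -A.δShift γ (2 * m - t) ∈ A.posPart Δ₁ := by
  have hmre := hΔ₁ hm.1.1
  rw [← refl_δShift (B_δ_of_δShift_mem_Δre hmre) hmre]
  exact hm.2 _ ⟨ht, fun h => htm (δShift_injective h)⟩

lemma δShift_mem_posPart_of_simpleOf {m t : ℤ} (hm : A.δShift γ m ∈ A.simpleOf Δ₁)
    (ht : -A.δShift γ t ∈ A.posPart Δ₁) : A.δShift γ (2 * m - t) ∈ A.posPart Δ₁ := by
  have hmre := hΔ₁ hm.1.1
  have hγ := B_δ_of_δShift_mem_Δre hmre
  have hγγ : A.B γ γ ≠ 0 := B_δShift_δShift hγ m m ▸ A.B_self_ne_zero hmre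
  rw [← refl_neg_δShift hγ hmre]
  exact hm.2 _ ⟨ht, neg_δShift_ne_δShift hγ hγγ t m⟩

lemma δShift_add_mem_posPart_of_simpleOf {m k t : ℤ} (hm : A.δShift γ m ∈ A.simpleOf Δ₁)
    (hk : A.δShift γ k ∈ A.simpleOf Δ₁) (ht : A.δShift γ t ∈ A.posPart Δ₁) (htm : t ≠ m) :
    A.δShift γ (t + 2 * (k - m)) ∈ A.posPart Δ₁ := by
  have h := δShift_mem_posPart_of_simpleOf hΔ₁ hk
    (neg_δShift_mem_posPart_of_simpleOf hΔ₁ hm ht htm)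
  rwa [show 2 * k - (2 * m - t) = t + 2 * (k - m) by ring] at h

lemma false_of_three_simpleOf {n₁ n₂ n₃ : ℤ} (h₁₂ : n₁ ≠ n₂) (h₁₃ : n₁ ≠ n₃) (h₂₃ : n₂ ≠ n₃)
    (h₁ : A.δShift γ n₁ ∈ A.simpleOf Δ₁) (h₂ : A.δShift γ n₂ ∈ A.simpleOf Δ₁)
    (h₃ : A.δShift γ n₃ ∈ A.simpleOf Δ₁) : False := by
  have hpos : A.δShift γ (3 * n₁ - 2 * n₂) ∈ A.posPart Δ₁ := by
    have h := δShift_add_mem_posPart_of_simpleOf hΔ₁ h₂ h₁ h₁.1 h₁₂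
    rwa [show n₁ + 2 * (n₁ - n₂) = 3 * n₁ - 2 * n₂ by ring] at h
  have hmid : A.δShift γ (n₁ + 2 * (n₂ - n₃)) ∈ A.posPart Δ₁ :=
    δShift_add_mem_posPart_of_simpleOf hΔ₁ h₃ h₂ h₁.1 h₁₃
  have hfar : A.δShift γ (2 * n₂ - n₁) ∈ A.posPart Δ₁ := by
    have h := δShift_add_mem_posPart_of_simpleOf hΔ₁ h₁ h₃ hmid (by omega)
    rwa [show n₁ + 2 * (n₂ - n₃) + 2 * (n₃ - n₁) = 2 * n₂ - n₁ by ring] at h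
  have hneg := neg_δShift_mem_posPart_of_simpleOf hΔ₁ h₁ hfar (by omega)
  rw [show 2 * n₁ - (2 * n₂ - n₁) = 3 * n₁ - 2 * n₂ by ring] at hneg
  exact A.not_both _ (hΔ₁ hpos.1) ⟨hpos.2, hneg.2⟩

lemma finite_setOf_δShift_mem_simpleOf : {n : ℤ | A.δShift γ n ∈ A.simpleOf Δ₁}.Finite := by
  set S := {n : ℤ | A.δShift γ n ∈ A.simpleOf Δ₁}
  rcases S.eq_empty_or_nonempty with hS | ⟨a, ha⟩
  · exact hS ▸ Set.finite_empty
  · have hsub : (S \ {a}).Subsingleton := fun b hb c hc => by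
      by_contra hbc
      exact false_of_three_simpleOf hΔ₁ (Ne.symm hb.2) (Ne.symm hc.2) hbc ha hb.1 hc.1
    exact hsub.finite.of_sdiff (Set.finite_singleton a)

end δString

end AffineRootSystem

/-- The set of simple roots `Π₁` of any subsystem `Δ₁` of the
real roots of an affine root system is finite. -/
theorem statement2 {ι V : Type*} [Fintype ι] [AddCommGroup V] [Module ℂ V]
    (A : AffineRootSystem ι V) (Δ₁ : Set V) (h : A.IsSubsystem Δ₁) :
    (A.simpleOf Δ₁).Finite := by
  obtain ⟨F, hF⟩ := A.cl_finite
  have hcover : A.simpleOf Δ₁ ⊆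
      ⋃ γ ∈ (F : Set V), A.δShift γ '' {n : ℤ | A.δShift γ n ∈ A.simpleOf Δ₁} := by
    intro α hα
    obtain ⟨γ, hγF, n, rfl⟩ := hF α (h.1 hα.1.1)
    have hshift : A.δShift γ n = γ + n • A.δ := by
      rw [AffineRootSystem.δShift, Int.cast_smul_eq_zsmul]
    exact Set.mem_biUnion hγF ⟨n, by rwa [Set.mem_ofPred_eq, hshift], hshift⟩
  refine (F.finite_toSet.biUnion fun γ _ => ?_).subset hcover
  exact (AffineRootSystem.finite_setOf_δShift_mem_simpleOf h.1).image _
end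

section
/- Let V_ℚ be a finite-dimensional ℚ-vector space, V_ℝ = ℝ ⊗_ℚ V_ℚ, V = ℂ ⊗_ℚ V_ℚ. Let X ⊆ V_ℚ*, A a countable index set, each Y_a a nonempty finite subset of V_ℚ*, and rational numbers B_x, C_{y,a}. Define Ω and Ω′ as the solution set of the equations ⟨x,λ⟩ = B_x and the subset where for each a some ⟨y,λ⟩ ∉ C_{y,a}ℤ. If Ω′ ≠ ∅ then Ω′ ∩ V_ℝ ≠ ∅; moreover for any z ∈ V_ℚ* not in the ℚ-span of X, there exists λ ∈ Ω′ ∩ V_ℝ with ⟨z, λ⟩ > 1. -/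
/-!
A point `λ ∈ Ω'` pairs rationally with every `x ∈ span X`, so some rational vector `v ∈ V_ℚ`
has the same pairings with `span X` as `λ`. For `u` transcendental and `(eⱼ)` a basis of the
annihilator of `span X`, the vector `w = ∑ uʲ ⊗ eⱼ` pairs to zero exactly with `span X`. Along
the real line `1 ⊗ v + t • w` the equations, and the conditions coming from `y ∈ span X`, are
those of `λ`, while each `y ∉ span X` pairs with `w` nontrivially and so excludes only countably
many `t`.
-/

open scoped TensorProduct

/-- The canonical pairing `⟨x, λ⟩` between a rational linear functional
`x ∈ V_ℚ*` and a point `λ` of `ℂ ⊗_ℚ V_ℚ`, extended `ℂ`-linearly. -/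
noncomputable def pairC {V : Type*} [AddCommGroup V] [Module ℚ V]
    (x : Module.Dual ℚ V) (lam : ℂ ⊗[ℚ] V) : ℂ :=
  TensorProduct.lift
    { toFun := fun c : ℂ => c • ((LinearMap.toSpanSingleton ℚ ℂ (1 : ℂ)).comp x)
      map_add' := fun a b => by ext v; simp [add_smul]
      map_smul' := fun q c => by ext v; simp [smul_assoc] } lam

/-- The canonical pairing over `ℝ`: `x ∈ V_ℚ*` against `λ ∈ ℝ ⊗_ℚ V_ℚ`. -/
noncomputable def pairR {V : Type*} [AddCommGroup V] [Module ℚ V]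
    (x : Module.Dual ℚ V) (lam : ℝ ⊗[ℚ] V) : ℝ :=
  TensorProduct.lift
    { toFun := fun c : ℝ => c • ((LinearMap.toSpanSingleton ℚ ℝ (1 : ℝ)).comp x)
      map_add' := fun a b => by ext v; simp [add_smul]
      map_smul' := fun q c => by ext v; simp [smul_assoc] } lam

/-- The inclusion `V_ℝ = ℝ ⊗_ℚ V_ℚ → V = ℂ ⊗_ℚ V_ℚ`. -/
noncomputable def realToComplex (V : Type*) [AddCommGroup V] [Module ℚ V] :
    ℝ ⊗[ℚ] V →ₗ[ℚ] ℂ ⊗[ℚ] V :=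
  LinearMap.rTensor V ((Algebra.linearMap ℝ ℂ).restrictScalars ℚ)

open Module

theorem Transcendental.linearIndependent_pow {R A : Type*} [CommRing R] [Ring A] [Algebra R A]
    {u : A} (hu : Transcendental R u) : LinearIndependent R (u ^ · : ℕ → A) := by
  classical
  refine linearIndependent_iff'.2 fun s g hg i hi => ?_
  let p : Polynomial R := ∑ j ∈ s, Polynomial.monomial j (g j)
  have hp : p = 0 := (transcendental_iff_injective.1 hu).eq_iff.1 <| by
    simpa [p, map_sum, Polynomial.aeval_monomial, Algebra.smul_def] using hg
  simpa [p, Polynomial.finsetSum_coeff, Polynomial.coeff_monomial, hi] using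
    congr_arg (Polynomial.coeff · i) hp

theorem exists_forall_apply_eq_of_dual {K V : Type*} [Field K] [AddCommGroup V] [Module K V]
    [FiniteDimensional K V] {S : Submodule K (Dual K V)} (ψ : S →ₗ[K] K) :
    ∃ v : V, ∀ x : S, (x : Dual K V) v = ψ x := by
  obtain ⟨Ψ, hΨ⟩ := LinearMap.exists_extend ψ
  exact ⟨(evalEquiv K V).symm Ψ, fun x => by simp [← hΨ]⟩

theorem exists_one_lt_add_mul_forall_ne {J : Type*} [Countable J] (d c C : J → ℝ)
    {d₀ c₀ : ℝ} (hc₀ : c₀ ≠ 0) :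
    ∃ t : ℝ, 1 < d₀ + t * c₀ ∧ ∀ j, c j ≠ 0 → ∀ n : ℤ, d j + t * c j ≠ n * C j := by
  let T := Set.range fun p : J × ℤ => (p.2 * C p.1 - d p.1) / c p.1
  obtain ⟨t, ht, hlt⟩ := ((Set.countable_range _).dense_compl ℝ (s := T)).exists_mem_open
    (isOpen_lt continuous_const (by fun_prop) : IsOpen {t : ℝ | 1 < d₀ + t * c₀})
    ⟨(2 - d₀) / c₀, by simp [div_mul_cancel₀ _ hc₀]⟩
  refine ⟨t, hlt, fun j hj n hn => ht ⟨(j, n), ?_⟩⟩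
  change (n * C j - d j) / c j = t
  rw [← hn]
  field_simp
  ring

section Pairing

variable {V : Type*} [AddCommGroup V] [Module ℚ V]

@[simp]
theorem pairC_tmul (x : Dual ℚ V) (c : ℂ) (v : V) : pairC x (c ⊗ₜ v) = c * x v := by
  simp [pairC, Algebra.smul_def, mul_comm]

@[simp]
theorem pairR_tmul (x : Dual ℚ V) (c : ℝ) (v : V) : pairR x (c ⊗ₜ v) = c * x v := by
  simp [pairR, Algebra.smul_def, mul_comm]

@[simp]
theorem pairC_add (x : Dual ℚ V) (l₁ l₂ : ℂ ⊗[ℚ] V) :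
    pairC x (l₁ + l₂) = pairC x l₁ + pairC x l₂ :=
  map_add _ _ _

@[simp]
theorem pairR_add (x : Dual ℚ V) (l₁ l₂ : ℝ ⊗[ℚ] V) :
    pairR x (l₁ + l₂) = pairR x l₁ + pairR x l₂ :=
  map_add _ _ _

@[simp]
theorem pairR_sum {ι : Type*} (x : Dual ℚ V) (s : Finset ι) (f : ι → ℝ ⊗[ℚ] V) :
    pairR x (∑ i ∈ s, f i) = ∑ i ∈ s, pairR x (f i) :=
  map_sum _ _ _

@[simp]
theorem pairR_smul (x : Dual ℚ V) (t : ℝ) (l : ℝ ⊗[ℚ] V) : pairR x (t • l) = t * pairR x l := by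
  induction l using TensorProduct.induction_on with
  | zero => simp [pairR]
  | tmul r v => simp [TensorProduct.smul_tmul', mul_assoc]
  | add l₁ l₂ h₁ h₂ => simp [h₁, h₂, mul_add]

@[simp]
theorem pairC_realToComplex (x : Dual ℚ V) (l : ℝ ⊗[ℚ] V) :
    pairC x (realToComplex V l) = pairR x l := by
  induction l using TensorProduct.induction_on with
  | zero => simp [pairC, pairR]
  | tmul r v => simp [realToComplex]
  | add l₁ l₂ h₁ h₂ => simp [h₁, h₂]

noncomputable def pairCLeft (lam : ℂ ⊗[ℚ] V) : Dual ℚ V →ₗ[ℚ] ℂ where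
  toFun x := pairC x lam
  map_add' x y := by
    induction lam using TensorProduct.induction_on with
    | zero => simp [pairC]
    | tmul c v => simp [mul_add]
    | add l₁ l₂ h₁ h₂ => simp only [pairC_add, h₁, h₂]; ring
  map_smul' q x := by
    induction lam using TensorProduct.induction_on with
    | zero => simp [pairC]
    | tmul c v => simp [Rat.smul_def]; ring
    | add l₁ l₂ h₁ h₂ => simp_all

theorem exists_ratCast_eq_pairC {X : Set (Dual ℚ V)} {B : Dual ℚ V → ℚ} {lam : ℂ ⊗[ℚ] V}
    (h : ∀ x ∈ X, pairC x lam = B x) :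
    ∃ ψ : Submodule.span ℚ X →ₗ[ℚ] ℚ, ∀ x, (ψ x : ℂ) = pairC x lam := by
  obtain ⟨g, hg⟩ := (Algebra.linearMap ℚ ℂ).exists_leftInverse_of_injective
    (LinearMap.ker_eq_bot.2 (algebraMap ℚ ℂ).injective)
  have hrat : Submodule.span ℚ X ≤
      (LinearMap.range (Algebra.linearMap ℚ ℂ)).comap (pairCLeft lam) :=
    Submodule.span_le.2 fun x hx => ⟨B x, by simp [pairCLeft, h x hx]⟩
  refine ⟨g ∘ₗ pairCLeft lam ∘ₗ (Submodule.span ℚ X).subtype, fun x => ?_⟩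
  obtain ⟨q, hq⟩ := hrat x.2
  have hgq : g (pairCLeft lam x) = q := by rw [← hq]; exact LinearMap.congr_fun hg q
  change ((g (pairCLeft lam x) : ℚ) : ℂ) = _
  rw [hgq]
  simpa [pairCLeft] using hq

theorem exists_pairR_eq_zero_iff (W : Submodule ℚ V) [FiniteDimensional ℚ W] :
    ∃ w : ℝ ⊗[ℚ] V, ∀ x : Dual ℚ V, pairR x w = 0 ↔ ∀ v ∈ W, x v = 0 := by
  obtain ⟨u, hu⟩ : ∃ u : ℝ, Transcendental ℚ u :=
    ((Algebraic.countable ℚ ℝ).dense_compl ℝ).nonempty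
  let e := Module.finBasis ℚ W
  let w : ℝ ⊗[ℚ] V := ∑ j : Fin (finrank ℚ W), (u ^ (j : ℕ)) ⊗ₜ ((e j : W) : V)
  refine ⟨w, fun x => ?_⟩
  have hpair : pairR x w = ∑ j : Fin (finrank ℚ W), x (e j) • u ^ (j : ℕ) := by
    simp [w, Rat.smul_def, mul_comm]
  rw [hpair]
  constructor
  · intro h v hv
    have he : ∀ j, x (e j) = 0 := Fintype.linearIndependent_iff.1
      (hu.linearIndependent_pow.comp _ Fin.val_injective) _ h
    have hW : x ∘ₗ W.subtype = 0 := e.ext fun j => he j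
    exact LinearMap.congr_fun hW ⟨v, hv⟩
  · intro h
    simp [h _ (e _).2]

theorem exists_pairR_eq_zero_iff_mem [FiniteDimensional ℚ V] (S : Submodule ℚ (Dual ℚ V)) :
    ∃ w : ℝ ⊗[ℚ] V, ∀ x : Dual ℚ V, pairR x w = 0 ↔ x ∈ S := by
  obtain ⟨w, hw⟩ := exists_pairR_eq_zero_iff S.dualCoannihilator
  refine ⟨w, fun x => ?_⟩
  rw [hw, ← Submodule.mem_dualAnnihilator, Subspace.dualCoannihilator_dualAnnihilator_eq]

end Pairing

theorem statement7_general {V : Type*} [AddCommGroup V] [Module ℚ V]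
    [FiniteDimensional ℚ V]
    (X : Set (Module.Dual ℚ V)) (A : Type*) [Countable A]
    (Y : A → Finset (Module.Dual ℚ V))
    (Bq : Module.Dual ℚ V → ℚ) (C : A → Module.Dual ℚ V → ℚ)
    (Ω : Set (ℂ ⊗[ℚ] V)) (hΩ : Ω = {lam | ∀ x ∈ X, pairC x lam = (Bq x : ℂ)})
    (Ω' : Set (ℂ ⊗[ℚ] V))
    (hΩ' : Ω' = {lam ∈ Ω | ∀ a : A, ∃ y ∈ Y a,
      ¬ ∃ n : ℤ, pairC y lam = (n : ℂ) * (C a y : ℂ)})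
    (hne : Ω'.Nonempty) :
    (∃ lamR : ℝ ⊗[ℚ] V, realToComplex V lamR ∈ Ω') ∧
    (∀ z : Module.Dual ℚ V, z ∉ Submodule.span ℚ X →
      ∃ lamR : ℝ ⊗[ℚ] V, realToComplex V lamR ∈ Ω' ∧ 1 < pairR z lamR) := by
  obtain ⟨lam, hlam⟩ := hne
  rw [hΩ', hΩ] at hlam
  obtain ⟨hlamX, hlamY⟩ := hlam
  set S := Submodule.span ℚ X
  obtain ⟨v, hv⟩ : ∃ v : V, ∀ x : S, pairC x lam = (x : Dual ℚ V) v := by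
    obtain ⟨ψ, hψ⟩ := exists_ratCast_eq_pairC hlamX
    obtain ⟨v, hv⟩ := exists_forall_apply_eq_of_dual ψ
    exact ⟨v, fun x => by rw [← hψ, hv]⟩
  obtain ⟨w, hw⟩ := exists_pairR_eq_zero_iff_mem S
  let d (j : Σ a, Y a) : ℝ := (j.2 : Dual ℚ V) v
  let c (j : Σ a, Y a) : ℝ := pairR (j.2 : Dual ℚ V) w
  let C' (j : Σ a, Y a) : ℝ := C j.1 j.2
  have hmem (t : ℝ) (ht : ∀ j, c j ≠ 0 → ∀ n : ℤ, d j + t * c j ≠ n * C' j) :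
      realToComplex V (1 ⊗ₜ v + t • w) ∈ Ω' := by
    rw [hΩ', hΩ]
    refine ⟨fun x hx => ?_, fun a => ?_⟩
    · simp [(hw x).2 (Submodule.subset_span hx), ← hlamX x hx, hv ⟨x, Submodule.subset_span hx⟩]
    obtain ⟨y, hy, hny⟩ := hlamY a
    refine ⟨y, hy, ?_⟩
    by_cases hyS : y ∈ S
    · simpa [(hw y).2 hyS, hv ⟨y, hyS⟩] using hny
    · rintro ⟨n, hn⟩
      exact ht ⟨a, y, hy⟩ ((hw y).not.2 hyS) n
        (Complex.ofReal_injective (by simpa [d, c, C'] using hn))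
  constructor
  · obtain ⟨t, -, ht⟩ := exists_one_lt_add_mul_forall_ne d c C' (d₀ := 0) one_ne_zero
    exact ⟨_, hmem t ht⟩
  · intro z hz
    obtain ⟨t, hz, ht⟩ := exists_one_lt_add_mul_forall_ne d c C' ((hw z).not.2 hz)
    exact ⟨_, hmem t ht, by simpa using hz⟩

/-- Real points of sets cut out by rational linear equations
and countably many non-congruence conditions: with `A` countable, `Ω' ≠ ∅`
implies `Ω' ∩ V_ℝ ≠ ∅`; moreover, for any `z ∈ V_ℚ*` not in the `ℚ`-span of
`X` there is `λ ∈ Ω' ∩ V_ℝ` with `⟨z, λ⟩ > 1`. -/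
theorem statement7 {V : Type*} [AddCommGroup V] [Module ℚ V]
    [FiniteDimensional ℚ V]
    (X : Set (Module.Dual ℚ V)) (A : Type*) [Countable A]
    (Y : A → Finset (Module.Dual ℚ V)) (hY : ∀ a, (Y a).Nonempty)
    (Bq : Module.Dual ℚ V → ℚ) (C : A → Module.Dual ℚ V → ℚ)
    (Ω : Set (ℂ ⊗[ℚ] V)) (hΩ : Ω = {lam | ∀ x ∈ X, pairC x lam = (Bq x : ℂ)})
    (Ω' : Set (ℂ ⊗[ℚ] V))
    (hΩ' : Ω' = {lam ∈ Ω | ∀ a : A, ∃ y ∈ Y a,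
      ¬ ∃ n : ℤ, pairC y lam = (n : ℂ) * (C a y : ℂ)})
    (hne : Ω'.Nonempty) :
    (∃ lamR : ℝ ⊗[ℚ] V, realToComplex V lamR ∈ Ω') ∧
    (∀ z : Module.Dual ℚ V, z ∉ Submodule.span ℚ X →
      ∃ lamR : ℝ ⊗[ℚ] V, realToComplex V lamR ∈ Ω' ∧ 1 < pairR z lamR) :=
  statement7_general X A Y Bq C Ω hΩ Ω' hΩ' hne
end
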